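/- Let n ≥ 2 and let z_1, …, z_n be real numbers with z_1 + z_2 + ⋯ + z_n = 0 and v_k := z_1 + ⋯ + z_k ≤ 0 for all 1 ≤ k ≤ n−1. If ∑_{k=1}^{n-1} (k(n−k)/2)·exp(z_{k+1} − z_k) = n(n²−1)/12, then z_k = 0 for all 1 ≤ k ≤ n. -/

import Mathlib

/-!
Let `V k = z 1 + ⋯ + z k`, so that `V 0 = V n = 0`, `V k ≤ 0` in between, and
`z (k+1) - z k` is the second difference of `V`. Bounding `exp x ≥ 1 + x` termwise and summing
by parts against the weights `r k = k (n - k) / 2`, whose second difference is `-1` and which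
vanish at `0` and `n`, gives
`∑ r k * exp (z (k+1) - z k) ≥ ∑ r k - ∑ V k = n (n² - 1) / 12 - ∑ V k`.
Equality therefore forces `∑ V k = 0`, hence every `V k = 0`, hence every `z k = 0`.
-/

open Finset

/-- Because of truncated subtraction this is the second difference only for `1 ≤ k`. -/
def secondDiff (f : ℕ → ℝ) (k : ℕ) : ℝ := f (k + 1) - 2 * f k + f (k - 1)

theorem sum_Icc_mul_secondDiff (r V : ℕ → ℝ) (m : ℕ) :
    ∑ k ∈ Icc 1 m, r k * secondDiff V k =
      ∑ k ∈ Icc 1 m, secondDiff r k * V k + (r m * V (m + 1) - r (m + 1) * V m)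
        + (r 1 * V 0 - r 0 * V 1) := by
  induction m with
  | zero => simp
  | succ m ih =>
    rw [sum_Icc_succ_top (by omega), sum_Icc_succ_top (by omega), ih]
    simp only [secondDiff, Nat.add_sub_cancel]
    ring

noncomputable def weight (n k : ℕ) : ℝ := k * ((n : ℝ) - k) / 2

theorem weight_nonneg {n k : ℕ} (hk : k ≤ n) : 0 ≤ weight n k := by
  have : (k : ℝ) ≤ n := by exact_mod_cast hk
  unfold weight
  positivity

theorem secondDiff_weight (n : ℕ) {k : ℕ} (hk : 1 ≤ k) : secondDiff (weight n) k = -1 := by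
  obtain ⟨j, rfl⟩ := Nat.exists_eq_add_of_le' hk
  simp only [secondDiff, weight, Nat.add_sub_cancel]
  push_cast
  ring

theorem sum_Icc_weight (n m : ℕ) :
    ∑ k ∈ Icc 1 m, weight n k = m * (m + 1) * (3 * n - 2 * m - 1) / 12 := by
  induction m with
  | zero => simp
  | succ m ih =>
    rw [sum_Icc_succ_top (by omega), ih, weight]
    push_cast
    ring

theorem sum_Icc_pred_weight {n : ℕ} (hn : 1 ≤ n) :
    ∑ k ∈ Icc 1 (n - 1), weight n k = n * ((n : ℝ) ^ 2 - 1) / 12 := by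
  rw [sum_Icc_weight, Nat.cast_pred hn]
  ring

theorem sum_Icc_pred_weight_mul_secondDiff {n : ℕ} (hn : 1 ≤ n) {V : ℕ → ℝ} (h0 : V 0 = 0)
    (hVn : V n = 0) :
    ∑ k ∈ Icc 1 (n - 1), weight n k * secondDiff V k = -∑ k ∈ Icc 1 (n - 1), V k := by
  rw [sum_Icc_mul_secondDiff, Nat.sub_add_cancel hn, hVn, h0,
    sum_congr rfl fun k hk => by rw [secondDiff_weight n (mem_Icc.1 hk).1]]
  simp [weight]

theorem sub_sum_le_sum_weight_mul_exp_secondDiff {n : ℕ} (hn : 1 ≤ n) {V : ℕ → ℝ}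
    (h0 : V 0 = 0) (hVn : V n = 0) :
    n * ((n : ℝ) ^ 2 - 1) / 12 - ∑ k ∈ Icc 1 (n - 1), V k ≤
      ∑ k ∈ Icc 1 (n - 1), weight n k * Real.exp (secondDiff V k) :=
  calc n * ((n : ℝ) ^ 2 - 1) / 12 - ∑ k ∈ Icc 1 (n - 1), V k
      = ∑ k ∈ Icc 1 (n - 1), weight n k * (1 + secondDiff V k) := by
        simp only [mul_add, mul_one, sum_add_distrib, sum_Icc_pred_weight hn,
          sum_Icc_pred_weight_mul_secondDiff hn h0 hVn, sub_eq_add_neg]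
    _ ≤ ∑ k ∈ Icc 1 (n - 1), weight n k * Real.exp (secondDiff V k) := by
        refine sum_le_sum fun k hk => mul_le_mul_of_nonneg_left ?_ (weight_nonneg ?_)
        · linarith [Real.add_one_le_exp (secondDiff V k)]
        · have := (mem_Icc.1 hk).2
          omega

theorem sum_Icc_one_sub_sum_Icc_one_pred (z : ℕ → ℝ) {k : ℕ} (hk : 1 ≤ k) :
    ∑ l ∈ Icc 1 k, z l - ∑ l ∈ Icc 1 (k - 1), z l = z k := by
  obtain ⟨j, rfl⟩ := Nat.exists_eq_add_of_le' hk
  rw [sum_Icc_succ_top (by omega), Nat.add_sub_cancel]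
  ring

theorem secondDiff_partial_sums (z : ℕ → ℝ) {k : ℕ} (hk : 1 ≤ k) :
    secondDiff (fun j => ∑ l ∈ Icc 1 j, z l) k = z (k + 1) - z k := by
  have hsucc := sum_Icc_one_sub_sum_Icc_one_pred z (Nat.le_add_left 1 k)
  rw [Nat.add_sub_cancel] at hsucc
  rw [secondDiff, ← hsucc, ← sum_Icc_one_sub_sum_Icc_one_pred z hk]
  ring

theorem stmt_2_general (n : ℕ) (z : ℕ → ℝ)
    (hsum : ∑ k ∈ Finset.Icc 1 n, z k = 0)
    (hneg : ∀ k, 1 ≤ k → k ≤ n - 1 → ∑ l ∈ Finset.Icc 1 k, z l ≤ 0)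
    (heq : ∑ k ∈ Finset.Icc 1 (n - 1),
        ((k : ℝ) * ((n : ℝ) - (k : ℝ)) / 2) * Real.exp (z (k + 1) - z k)
      = (n : ℝ) * ((n : ℝ) ^ 2 - 1) / 12) :
    ∀ k, 1 ≤ k → k ≤ n → z k = 0 := by
  rcases Nat.eq_zero_or_pos n with rfl | hn
  · intro k hk hk0
    omega
  set V : ℕ → ℝ := fun j => ∑ l ∈ Icc 1 j, z l with hV
  have hV0 : V 0 = 0 := by simp [hV]
  have hexp : ∑ k ∈ Icc 1 (n - 1), weight n k * Real.exp (secondDiff V k)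
      = n * ((n : ℝ) ^ 2 - 1) / 12 := by
    rw [← heq]
    refine sum_congr rfl fun k hk => ?_
    rw [hV, secondDiff_partial_sums z (mem_Icc.1 hk).1, weight]
  have hnonpos : ∀ k ∈ Icc 1 (n - 1), V k ≤ 0 := fun k hk =>
    hneg k (mem_Icc.1 hk).1 (mem_Icc.1 hk).2
  have hsumV : ∑ k ∈ Icc 1 (n - 1), V k = 0 :=
    le_antisymm (sum_nonpos hnonpos)
      (by linarith [sub_sum_le_sum_weight_mul_exp_secondDiff hn hV0 hsum])
  have hVzero : ∀ k ≤ n, V k = 0 := by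
    intro k hk
    rcases Nat.eq_zero_or_pos k with rfl | hk0
    · exact hV0
    rcases hk.lt_or_eq with hlt | rfl
    · exact (sum_eq_zero_iff_of_nonpos hnonpos).1 hsumV k (mem_Icc.2 ⟨hk0, by omega⟩)
    · exact hsum
  intro k hk hkn
  rw [← sum_Icc_one_sub_sum_Icc_one_pred z hk]
  exact sub_eq_zero.2 ((hVzero k hkn).trans (hVzero (k - 1) (by omega)).symm)

/-- Equality case of the core inequality: equality in the weighted exponential
inequality forces all `z k` to vanish. -/
theorem stmt_2 (n : ℕ) (hn : 2 ≤ n) (z : ℕ → ℝ)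
    (hsum : ∑ k ∈ Finset.Icc 1 n, z k = 0)
    (hneg : ∀ k, 1 ≤ k → k ≤ n - 1 → ∑ l ∈ Finset.Icc 1 k, z l ≤ 0)
    (heq : ∑ k ∈ Finset.Icc 1 (n - 1),
        ((k : ℝ) * ((n : ℝ) - (k : ℝ)) / 2) * Real.exp (z (k + 1) - z k)
      = (n : ℝ) * ((n : ℝ) ^ 2 - 1) / 12) :
    ∀ k, 1 ≤ k → k ≤ n → z k = 0 :=
  stmt_2_general n z hsum hneg heq
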